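/- arXiv:2402.16148 — 6 statements merged into one kernel-verified Lean document; each statement's English description precedes it below -/
import Mathlib

section
/- For an infinite cardinal κ and a set X with the discrete topology, a free (nonprincipal) ultrafilter F on X lies in the intersection of all κ-Lindelöf subspaces Y of the Stone–Čech compactification βX with X ⊆ Y if and only if F is κ-complete. -/
universe u

/-- A topological space is `κ`-Lindelöf if every open cover admits a subcover of
cardinality strictly less than `κ`. -/
def IsKLindelof (κ : Cardinal.{u}) (Z : Type u) [TopologicalSpace Z] : Prop :=
  ∀ 𝒰 : Set (Set Z), (∀ U ∈ 𝒰, IsOpen U) → ⋃₀ 𝒰 = Set.univ →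
    ∃ 𝒱 ⊆ 𝒰, Cardinal.mk 𝒱 < κ ∧ ⋃₀ 𝒱 = Set.univ

/-- An ultrafilter is `κ`-complete if every subfamily of cardinality `< κ` has
intersection in the ultrafilter. -/
def Ultrafilter.KComplete {X : Type u} (κ : Cardinal.{u}) (F : Ultrafilter X) : Prop :=
  ∀ S : Set (Set X), (∀ A ∈ S, A ∈ F) → Cardinal.mk S < κ → ⋂₀ S ∈ F

theorem kComplete_mem_aux {X : Type u} (κ : Cardinal.{u})
    (hκ : Cardinal.aleph0 ≤ κ) (F : Ultrafilter X) (hc : F.KComplete κ)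
    (Y : Set (Ultrafilter X)) (hXY : Set.range (pure : X → Ultrafilter X) ⊆ Y)
    (hL : IsKLindelof κ Y) : F ∈ Y := by
  by_contra hF
  set 𝒰 : Set (Set Y) :=
    {V | ∃ A : Set X, Aᶜ ∈ F ∧ V = {u : Y | A ∈ (u : Ultrafilter X)}} with h𝒰
  have hopen : ∀ U ∈ 𝒰, IsOpen U := by
    rintro U ⟨A, hA, rfl⟩
    exact (ultrafilter_isOpen_basic A).preimage continuous_subtype_val
  have hcov : ⋃₀ 𝒰 = Set.univ := by
    ext ⟨G, hG⟩
    simp only [Set.mem_univ, iff_true, Set.mem_sUnion]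
    have hGF : G ≠ F := fun h => hF (h ▸ hG)
    have : ∃ A, A ∈ G ∧ A ∉ F := by
      by_contra h
      push_neg at h
      exact hGF (Ultrafilter.eq_of_le (show (F : Filter X) ≤ (G : Filter X) from fun s hs => h s hs)).symm
    obtain ⟨A, hAG, hAF⟩ := this
    exact ⟨{u : Y | A ∈ (u : Ultrafilter X)}, ⟨A, Ultrafilter.compl_mem_iff_notMem.2 hAF, rfl⟩, hAG⟩
  obtain ⟨𝒱, h𝒱𝒰, hcard, hcov'⟩ := hL 𝒰 hopen hcov
  choose A hAF hVA using fun V : 𝒱 => h𝒱𝒰 V.2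
  set S : Set (Set X) := Set.range fun V : 𝒱 => (A V)ᶜ with hS
  have hSF : ∀ B ∈ S, B ∈ F := by rintro B ⟨V, rfl⟩; exact hAF V
  have hScard : Cardinal.mk S < κ := lt_of_le_of_lt Cardinal.mk_range_le hcard
  have hmem : ⋂₀ S ∈ F := hc S hSF hScard
  obtain ⟨x, hx⟩ := F.nonempty_of_mem hmem
  have hxY : pure x ∈ Y := hXY ⟨x, rfl⟩
  have : (⟨pure x, hxY⟩ : Y) ∈ ⋃₀ 𝒱 := hcov' ▸ Set.mem_univ _
  obtain ⟨V, hV𝒱, hxV⟩ := this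
  have heq := hVA ⟨V, hV𝒱⟩
  have hxA : x ∈ A ⟨V, hV𝒱⟩ := by
    have : (⟨pure x, hxY⟩ : Y) ∈ {u : Y | A ⟨V, hV𝒱⟩ ∈ (u : Ultrafilter X)} := heq ▸ hxV
    exact this
  exact hx _ ⟨⟨V, hV𝒱⟩, rfl⟩ hxA

theorem mem_all_kComplete_aux {X : Type u} (κ : Cardinal.{u})
    (hκ : Cardinal.aleph0 ≤ κ) (F : Ultrafilter X)
    (h : ∀ Y : Set (Ultrafilter X), Set.range (pure : X → Ultrafilter X) ⊆ Y →
      IsKLindelof κ Y → F ∈ Y) : F.KComplete κ := by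
  intro S hSF hScard
  by_contra h0
  set T : Set (Set X) := insert (⋂₀ S)ᶜ S with hT
  have hTF : ∀ A ∈ T, A ∈ F := by
    rintro A (rfl | hA)
    · exact Ultrafilter.compl_mem_iff_notMem.2 h0
    · exact hSF A hA
  have hTcard : Cardinal.mk T < κ := by
    refine lt_of_le_of_lt (Cardinal.mk_insert_le) ?_
    exact Cardinal.add_lt_of_lt hκ hScard (lt_of_lt_of_le Cardinal.one_lt_aleph0 hκ)
  have hTempty : ⋂₀ T = ∅ := by
    rw [hT, Set.sInter_insert]
    exact Set.compl_inter_self _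
  set Y : Set (Ultrafilter X) := {G | ∃ A ∈ T, Aᶜ ∈ G} with hY
  have hFY : F ∉ Y := by
    rintro ⟨A, hA, hAc⟩
    exact (Ultrafilter.compl_mem_iff_notMem.1 hAc) (hTF A hA)
  have hXY : Set.range (pure : X → Ultrafilter X) ⊆ Y := by
    rintro _ ⟨x, rfl⟩
    have hx : x ∉ ⋂₀ T := by rw [hTempty]; exact Set.notMem_empty x
    rw [Set.mem_sInter] at hx
    push_neg at hx
    obtain ⟨A, hA, hxA⟩ := hx
    exact ⟨A, hA, by simpa using hxA⟩
  refine hFY (h Y hXY ?_)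
  intro 𝒰 hopen hcov
  choose V hVopen hVpre using fun U : 𝒰 => (isOpen_induced_iff.1 (hopen U U.2))
  have key : ∀ A : T, ∃ t : Finset 𝒰,
      {G : Ultrafilter X | (A : Set X)ᶜ ∈ G} ⊆ ⋃ U ∈ t, V U := by
    intro A
    have hcomp : IsCompact {G : Ultrafilter X | (A : Set X)ᶜ ∈ G} :=
      (ultrafilter_isClosed_basic _).isCompact
    refine hcomp.elim_finite_subcover V hVopen ?_
    intro G hG
    have hGY : G ∈ Y := ⟨A, A.2, hG⟩
    have : (⟨G, hGY⟩ : Y) ∈ ⋃₀ 𝒰 := hcov ▸ Set.mem_univ _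
    obtain ⟨U, hU, hGU⟩ := this
    refine Set.mem_iUnion.2 ⟨⟨U, hU⟩, ?_⟩
    have : (⟨G, hGY⟩ : Y) ∈ Subtype.val ⁻¹' V ⟨U, hU⟩ := (hVpre ⟨U, hU⟩).symm ▸ hGU
    exact this
  choose t ht using key
  set 𝒱 : Set (Set Y) := ⋃ A : T, (fun U : 𝒰 => (U : Set Y)) '' ↑(t A) with h𝒱
  have h𝒱𝒰 : 𝒱 ⊆ 𝒰 := by
    rintro W hW
    obtain ⟨A, ⟨U, _, rfl⟩⟩ := Set.mem_iUnion.1 hW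
    exact U.2
  have hcard : Cardinal.mk 𝒱 < κ := by
    rcases lt_or_ge (Cardinal.mk T) Cardinal.aleph0 with hTfin | hTinf
    · have hfinT : T.Finite := Cardinal.lt_aleph0_iff_set_finite.1 hTfin
      haveI : Finite T := hfinT
      have : 𝒱.Finite :=
        Set.finite_iUnion fun A => ((t A).finite_toSet.image _)
      exact lt_of_lt_of_le this.lt_aleph0 hκ
    · haveI : Nonempty T := ⟨⟨(⋂₀ S)ᶜ, Set.mem_insert _ _⟩⟩
      calc Cardinal.mk 𝒱 ≤ Cardinal.mk T * ⨆ A : T,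
              Cardinal.mk ((fun U : 𝒰 => (U : Set Y)) '' ↑(t A)) := Cardinal.mk_iUnion_le _
        _ ≤ Cardinal.mk T * Cardinal.aleph0 := by
            refine mul_le_mul' le_rfl (ciSup_le' fun A => ?_)
            exact (((t A).finite_toSet.image _).lt_aleph0).le
        _ = Cardinal.mk T := by
            rw [Cardinal.mul_eq_max hTinf le_rfl, max_eq_left hTinf]
        _ < κ := hTcard
  refine ⟨𝒱, h𝒱𝒰, hcard, ?_⟩
  rw [Set.eq_univ_iff_forall]
  rintro ⟨G, hG⟩
  rw [Set.mem_sUnion]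
  have hG2 := hG
  obtain ⟨A, hA, hAc⟩ := hG2
  have hGcov := ht ⟨A, hA⟩ hAc
  obtain ⟨U, hUmem⟩ := Set.mem_iUnion.1 hGcov
  obtain ⟨hUt, hGV⟩ := Set.mem_iUnion.1 hUmem
  refine ⟨(U : Set Y), Set.mem_iUnion.2 ⟨⟨A, hA⟩, ⟨U, hUt, rfl⟩⟩, ?_⟩
  have : (⟨G, hG⟩ : Y) ∈ Subtype.val ⁻¹' V U := hGV
  rw [hVpre U] at this
  exact this

/-- A free ultrafilter on a discrete space `X` lies in every `κ`-Lindelöf subspace of `βX`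
containing `X` iff it is `κ`-complete. -/
theorem mem_kLindelof_subspaces_iff_kComplete {X : Type u} (κ : Cardinal.{u})
    (hκ : Cardinal.aleph0 ≤ κ) (F : Ultrafilter X) (hfree : ∀ x : X, F ≠ pure x) :
    (∀ Y : Set (Ultrafilter X), Set.range (pure : X → Ultrafilter X) ⊆ Y →
      IsKLindelof κ Y → F ∈ Y) ↔ F.KComplete κ := by
  exact ⟨mem_all_kComplete_aux κ hκ F, fun hc Y hXY hL => kComplete_mem_aux κ hκ F hc Y hXY hL⟩
end

section
/- Let κ be an infinite cardinal and X a discrete space. Then every κ-complete free ultrafilter on X belongs to every κ-Lindelöf subspace Y of βX with X ⊆ Y. -/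
universe u

/-- Every `κ`-complete free ultrafilter belongs to every `κ`-Lindelöf subspace of `βX`
containing (the principal ultrafilters of) `X`. -/
theorem kComplete_mem_kLindelof_subspace {X : Type u} (κ : Cardinal.{u})
    (hκ : Cardinal.aleph0 ≤ κ) (F : Ultrafilter X) (hfree : ∀ x : X, F ≠ pure x)
    (hcomp : F.KComplete κ) (Y : Set (Ultrafilter X))
    (hXY : Set.range (pure : X → Ultrafilter X) ⊆ Y) (hFY : F ∉ Y) :
    ¬ IsKLindelof κ Y := by
  intro hL
  -- the cover of Y by basic open sets coming from sets not in F
  set 𝒰 : Set (Set Y) :=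
    {V | ∃ A : Set X, A ∉ F ∧ V = (Subtype.val ⁻¹' {G : Ultrafilter X | A ∈ G})} with h𝒰
  have hopen : ∀ U ∈ 𝒰, IsOpen U := by
    rintro U ⟨A, -, rfl⟩
    exact (ultrafilter_isOpen_basic A).preimage continuous_subtype_val
  have hcover : ⋃₀ 𝒰 = Set.univ := by
    ext ⟨G, hG⟩
    simp only [Set.mem_sUnion, Set.mem_univ, iff_true]
    have hGF : G ≠ F := fun h => hFY (h ▸ hG)
    have : ∃ A : Set X, A ∈ G ∧ A ∉ F := by
      by_contra h
      push_neg at h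
      exact hGF (Ultrafilter.coe_le_coe.mp (fun A hA => h A hA)).symm
    obtain ⟨A, hAG, hAF⟩ := this
    exact ⟨_, ⟨A, hAF, rfl⟩, hAG⟩
  obtain ⟨𝒱, h𝒱𝒰, hcard, hVcov⟩ := hL 𝒰 hopen hcover
  -- choose witnesses
  choose a ha1 ha2 using fun (V : 𝒱) => h𝒱𝒰 V.2
  set S : Set (Set X) := Set.range (fun V : 𝒱 => (a V)ᶜ) with hS
  have hSF : ∀ A ∈ S, A ∈ F := by
    rintro _ ⟨V, rfl⟩
    exact Ultrafilter.compl_mem_iff_notMem.mpr (ha1 V)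
  have hScard : Cardinal.mk S < κ :=
    lt_of_le_of_lt Cardinal.mk_range_le hcard
  have hmem := hcomp S hSF hScard
  obtain ⟨x, hx⟩ := Ultrafilter.nonempty_of_mem hmem
  have hxY : pure x ∈ Y := hXY ⟨x, rfl⟩
  have : (⟨pure x, hxY⟩ : Y) ∈ ⋃₀ 𝒱 := hVcov ▸ Set.mem_univ _
  obtain ⟨V, hV, hxV⟩ := this
  have hxA : x ∈ a ⟨V, hV⟩ := by
    have hxV' : (⟨pure x, hxY⟩ : Y) ∈ ((⟨V, hV⟩ : 𝒱) : Set Y) := hxV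
    rw [ha2 ⟨V, hV⟩] at hxV'
    simpa using hxV'
  exact (hx _ ⟨⟨V, hV⟩, rfl⟩) hxA
end

section
/- For an infinite ordinal α with uncountable cofinality (cf(α) > ω₀), every open cover of the space α of cardinality strictly less than cf(α) admits a finite subcover. -/
/-!
An open cover `𝒰` of the well-ordered space `α` with `#𝒰 < cf(α)` covers the stationary set `α`,
so, as `cf(α) ≠ ℵ₀`, one of its members `U` is stationary. Since `Uᶜ` is closed, it cannot also be
cofinal (it would be a club disjoint from `U`), so `U` contains a final segment `[a, α)`. The rest
of the cover only has to cover the closed subset `Uᶜ` of the compact interval `[0, a]`.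
-/

open Set Cardinal Order

theorem exists_finite_subcover_of_isCompact_compl {Y : Type*} [TopologicalSpace Y]
    {𝒰 : Set (Set Y)} (hopen : ∀ U ∈ 𝒰, IsOpen U) (hcov : ⋃₀ 𝒰 = Set.univ) {U : Set Y}
    (hU : U ∈ 𝒰) (hUc : IsCompact Uᶜ) : ∃ 𝒱 ⊆ 𝒰, 𝒱.Finite ∧ ⋃₀ 𝒱 = Set.univ := by
  obtain ⟨𝒲, h𝒲𝒰, h𝒲, hUc𝒲⟩ := hUc.elim_finite_subcover_image (c := id) hopen
    (by simp [← sUnion_eq_biUnion, hcov])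
  refine ⟨insert U 𝒲, insert_subset hU h𝒲𝒰, h𝒲.insert U, ?_⟩
  rw [sUnion_insert, ← compl_subset_iff_union, sUnion_eq_biUnion]
  exact hUc𝒲

section OrderTopology

variable {X : Type*} [LinearOrder X] [TopologicalSpace X] [OrderTopology X]

theorem IsClosed.dirSupClosed {s : Set X} (hs : IsClosed s) : DirSupClosed s :=
  fun _ hds hd _ _ ha ↦ hs.closure_subset_iff.2 hds (ha.mem_closure hd)

theorem IsStationary.exists_Ici_subset_of_isOpen {U : Set X} (hst : IsStationary U)
    (hU : IsOpen U) : ∃ a, Ici a ⊆ U := by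
  by_contra! h
  have hcofinal : IsCofinal Uᶜ := fun a ↦ by
    obtain ⟨b, hab, hbU⟩ := not_subset.1 (h a)
    exact ⟨b, hbU, hab⟩
  obtain ⟨x, hxU, hxUc⟩ := hst ⟨hU.isClosed_compl.dirSupClosed, hcofinal⟩
  exact hxUc hxU

theorem WellFoundedLT.isCompact_Iic [WellFoundedLT X] (a : X) : IsCompact (Iic a) := by
  have : Nonempty X := ⟨a⟩
  let := WellFoundedLT.toOrderBot X
  let := WellFoundedLT.conditionallyCompleteLinearOrderBot X
  simpa only [Icc_bot] using isCompact_Icc (a := ⊥) (b := a)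

theorem exists_finite_subcover_of_mk_lt_cof [WellFoundedLT X] (hX : cof X ≠ ℵ₀)
    {𝒰 : Set (Set X)} (hopen : ∀ U ∈ 𝒰, IsOpen U) (hcov : ⋃₀ 𝒰 = Set.univ) (hcard : #𝒰 < cof X) :
    ∃ 𝒱 ⊆ 𝒰, 𝒱.Finite ∧ ⋃₀ 𝒱 = Set.univ := by
  have : Nonempty X := cof_ne_zero_iff.1 (pos_of_gt hcard).ne'
  obtain ⟨U, hU𝒰, hst⟩ := (isStationary_sUnion_iff hX hcard).1 (hcov ▸ IsStationary.univ)
  obtain ⟨a, haU⟩ := hst.exists_Ici_subset_of_isOpen (hopen U hU𝒰)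
  have hUc : IsCompact Uᶜ :=
    (WellFoundedLT.isCompact_Iic a).of_isClosed_subset (hopen U hU𝒰).isClosed_compl fun x hx ↦
      le_of_not_ge fun hax ↦ hx (haU hax)
  exact exists_finite_subcover_of_isCompact_compl hopen hcov hU𝒰 hUc

end OrderTopology

theorem ordinal_small_cover_finite_subcover_general (α : Ordinal.{0})
    (hcf : Cardinal.aleph0 < α.cof)
    (𝒰 : Set (Set ↥(Set.Iio α))) (hopen : ∀ U ∈ 𝒰, IsOpen U) (hcov : ⋃₀ 𝒰 = Set.univ)
    (hcard : Cardinal.mk 𝒰 < Cardinal.lift.{1} α.cof) :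
    ∃ 𝒱 ⊆ 𝒰, 𝒱.Finite ∧ ⋃₀ 𝒱 = Set.univ := by
  have hcof : cof (Iio α) = Cardinal.lift.{1} α.cof := by simp
  refine exists_finite_subcover_of_mk_lt_cof ?_ hopen hcov (hcof ▸ hcard)
  rw [hcof]
  exact (aleph0_lt_lift.2 hcf).ne'

/-- For an infinite ordinal `α` of uncountable cofinality, every open cover of `α` of
cardinality strictly less than `cf(α)` has a finite subcover. -/
theorem ordinal_small_cover_finite_subcover (α : Ordinal.{0}) (hα : Ordinal.omega0 ≤ α)
    (hcf : Cardinal.aleph0 < α.cof)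
    (𝒰 : Set (Set ↥(Set.Iio α))) (hopen : ∀ U ∈ 𝒰, IsOpen U) (hcov : ⋃₀ 𝒰 = Set.univ)
    (hcard : Cardinal.mk 𝒰 < Cardinal.lift.{1} α.cof) :
    ∃ 𝒱 ⊆ 𝒰, 𝒱.Finite ∧ ⋃₀ 𝒱 = Set.univ :=
  ordinal_small_cover_finite_subcover_general α hcf 𝒰 hopen hcov hcard
end

section
/- If α is an ordinal with cf(α) > ω₀, then the Stone–Čech compactification of the order-topology space α is α + 1; equivalently, every continuous bounded real-valued function on α extends continuously to α + 1. -/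
open Filter Set Topology Uniformity

universe u

/-!
On an ordinal `α` of uncountable cofinality every countable subset of `α` is bounded in `α`, so
every monotone sequence in `α` converges in `α`. Hence a continuous `f : α → ℝ` is Cauchy at the
top: otherwise one finds interleaved points `b₀ ≤ x₀, y₀ ≤ b₁ ≤ x₁, y₁ ≤ …` with `f xₙ` and `f yₙ`
far apart, while both `xₙ` and `yₙ` converge to `sup bₙ < α`, contradicting continuity there.
Sending `α` to the limit of `f` extends `f` continuously to `α + 1`.
-/

section LinearOrder

variable {ι X : Type*} [LinearOrder ι] [TopologicalSpace ι] [OrderTopology ι]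

theorem Continuous.cauchy_map_atTop [Nonempty ι] [UniformSpace X] {f : ι → X} (hf : Continuous f)
    (hseq : ∀ u : ℕ → ι, Monotone u → ∃ s, Tendsto u atTop (𝓝 s)) :
    Cauchy (map f atTop) := by
  rw [cauchy_map_iff', prod_atTop_atTop_eq]
  by_contra hcauchy
  obtain ⟨U, hU, hfar⟩ : ∃ U ∈ 𝓤 X, ∀ b₁ b₂ : ι, ∃ x, b₁ ≤ x ∧ ∃ y, b₂ ≤ y ∧ (f x, f y) ∉ U := by
    simpa [Tendsto, Filter.le_def, Filter.not_eventually] using hcauchy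
  choose x hx y hy hxy using fun b ↦ hfar b b
  set b : ℕ → ι := fun n ↦ (fun t ↦ max (x t) (y t))^[n] (Classical.arbitrary ι)
  have hb_succ (n : ℕ) : b (n + 1) = max (x (b n)) (y (b n)) :=
    Function.iterate_succ_apply' _ _ _
  have hb : Monotone b := monotone_nat_of_le_succ fun n ↦
    (hx (b n)).trans ((le_max_left _ _).trans_eq (hb_succ n).symm)
  obtain ⟨s, hs⟩ := hseq b hb
  have hs_succ : Tendsto (fun n ↦ b (n + 1)) atTop (𝓝 s) := (tendsto_add_atTop_iff_nat 1).2 hs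
  have hxs : Tendsto (fun n ↦ x (b n)) atTop (𝓝 s) :=
    tendsto_of_tendsto_of_tendsto_of_le_of_le hs hs_succ (fun n ↦ hx (b n))
      fun n ↦ (le_max_left _ _).trans_eq (hb_succ n).symm
  have hys : Tendsto (fun n ↦ y (b n)) atTop (𝓝 s) :=
    tendsto_of_tendsto_of_tendsto_of_le_of_le hs hs_succ (fun n ↦ hy (b n))
      fun n ↦ (le_max_right _ _).trans_eq (hb_succ n).symm
  have hpair : Tendsto (fun n ↦ (f (x (b n)), f (y (b n)))) atTop (𝓤 X) :=
    (((hf.tendsto s).comp hxs).prodMk_nhds ((hf.tendsto s).comp hys)).mono_right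
      (nhds_le_uniformity (f s))
  obtain ⟨n, hn⟩ := (hpair.eventually_mem hU).exists
  exact hxy (b n) hn

theorem continuous_dite_Iic_of_tendsto [TopologicalSpace X] {a : ι} (ha : Order.IsSuccPrelimit a)
    {f : Iio a → X} (hf : Continuous f) {c : X} (hc : Tendsto f atTop (𝓝 c)) :
    Continuous fun y : Iic a ↦ if h : (y : ι) < a then f ⟨y, h⟩ else c := by
  set F : ι → X := fun y ↦ if h : y < a then f ⟨y, h⟩ else c
  have hF : ∀ y : Iio a, F y = f y := fun y ↦ dif_pos y.2
  suffices ContinuousOn F (Iic a) from continuousOn_iff_continuous_domRestrict.1 this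
  intro y hy
  rcases hy.lt_or_eq with hlt | rfl
  · have hFf : ContinuousOn F (Iio a) :=
      continuousOn_iff_continuous_domRestrict.2 (by simpa [Set.domRestrict_def, hF] using hf)
    exact (hFf.continuousAt (isOpen_Iio.mem_nhds hlt)).continuousWithinAt
  · rw [← continuousWithinAt_Iio_iff_Iic, ContinuousWithinAt, ← tendsto_comp_coe_Iio_atTop ha]
    simpa [F, hF] using hc

end LinearOrder

theorem Ordinal.exists_tendsto_of_monotone {α : Ordinal.{u}} (hα : Cardinal.aleph0 < α.cof)
    (v : ℕ → Iio α) (hv : Monotone v) : ∃ s, Tendsto v atTop (𝓝 s) := by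
  have hsup : ⨆ n, (v n : Ordinal) < α :=
    Ordinal.lift_iSup_lt_of_lt_cof (by simpa using hα) fun n ↦ (v n).2
  exact ⟨⟨_, hsup⟩, tendsto_subtype_rng.2 <|
    tendsto_atTop_ciSup (fun _ _ h ↦ hv h) Ordinal.bddAbove_of_small⟩

theorem stoneCech_ordinal_eq_succ_general (α : Ordinal.{0}) (hcf : Cardinal.aleph0 < α.cof)
    (f : ↥(Set.Iio α) → ℝ) (hf : Continuous f) :
    ∃ g : ↥(Set.Iic α) → ℝ, Continuous g ∧
      ∀ (x : Ordinal) (hx : x < α), g ⟨x, le_of_lt hx⟩ = f ⟨x, hx⟩ := by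
  have hlim : Order.IsSuccLimit α := Ordinal.one_lt_cof_iff.1 (Cardinal.one_lt_aleph0.trans hcf)
  have : Nonempty (Iio α) := ⟨⟨0, hlim.bot_lt⟩⟩
  obtain ⟨c, hc⟩ := CompleteSpace.complete
    (hf.cauchy_map_atTop (Ordinal.exists_tendsto_of_monotone hcf))
  exact ⟨_, continuous_dite_Iic_of_tendsto hlim.isSuccPrelimit hf hc, fun x hx ↦ dif_pos hx⟩

/-- If `cf(α) > ω₀`, then `β α = α + 1`: every bounded continuous real-valued function on
the ordinal space `α` extends continuously to `α + 1`. -/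
theorem stoneCech_ordinal_eq_succ (α : Ordinal.{0}) (hcf : Cardinal.aleph0 < α.cof)
    (f : ↥(Set.Iio α) → ℝ) (hf : Continuous f) (hbd : ∃ M, ∀ x, |f x| ≤ M) :
    ∃ g : ↥(Set.Iic α) → ℝ, Continuous g ∧
      ∀ (x : Ordinal) (hx : x < α), g ⟨x, le_of_lt hx⟩ = f ⟨x, hx⟩ :=
  stoneCech_ordinal_eq_succ_general α hcf f hf
end

section
/- A topological space that is both pseudocompact and realcompact is compact. (Equivalently: PsCpt ∩ RCpt = Cpt within completely regular Hausdorff spaces.) -/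
universe u

/-- A pseudocompact realcompact (completely regular Hausdorff) space is compact. -/
theorem pseudocompact_realcompact_compact {X : Type u} [TopologicalSpace X]
    [CompletelyRegularSpace X] [T2Space X]
    (hps : ∀ f : X → ℝ, Continuous f → ∃ M, ∀ x, |f x| ≤ M)
    (hrc : ∃ (ι : Type u) (e : X → ι → ℝ), Topology.IsClosedEmbedding e) :
    CompactSpace X := by
  obtain ⟨ι, e, he⟩ := hrc
  choose M hM using fun i => hps (fun x => e x i)
    ((continuous_apply i).comp he.continuous)
  have hsub : Set.range e ⊆ Set.pi Set.univ (fun i => Set.Icc (-(M i)) (M i)) := by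
    rintro _ ⟨x, rfl⟩ i _
    exact abs_le.mp (hM i x)
  have hK : IsCompact (Set.pi Set.univ (fun i => Set.Icc (-(M i)) (M i))) :=
    isCompact_univ_pi fun i => isCompact_Icc
  have hcr : IsCompact (Set.range e) := hK.of_isClosed_subset he.isClosed_range hsub
  constructor
  rw [he.toIsEmbedding.isCompact_iff, Set.image_univ]
  exact hcr
end

section
/- Let A be the set consisting of the countable successor ordinals together with the point ω₁, viewed as a subspace of ω₁ + 1 with the order topology. Then every compact subset of A is finite; consequently A is Lindelöf but not σ-compact. -/
/-!
Every point of `succSet` other than `ω₁` is isolated, and a countable set of such points is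
bounded by some `β < ω₁`, so its closure misses `ω₁`. An infinite compact `K` would contain a
countably infinite set `S` of isolated points; then `K ∩ closure S` is compact and discrete,
hence finite, a contradiction. Every neighbourhood of `ω₁` has countable complement, which
gives the Lindelöf property, while a σ-compact space with finite compact sets is countable
and `succSet` contains the successors of all countable ordinals.
-/

/-- The set of countable successor ordinals together with `ω₁`, as a subspace of
`ω₁ + 1`. -/
def succSet : Set Ordinal.{0} :=
  {o | o < (Cardinal.aleph 1).ord ∧ ∃ b, o = b + 1} ∪ {(Cardinal.aleph 1).ord}

open Set Filter Topology Ordinal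

namespace Ordinal

theorem countable_Iio_iff {a : Ordinal.{u}} : (Iio a).Countable ↔ a < ω₁ := by
  rw [← Cardinal.le_aleph0_iff_set_countable, Cardinal.mk_Iio_ordinal, Cardinal.lift_le_aleph0,
    ← Cardinal.lt_aleph_one_iff, ← Cardinal.lt_ord, Cardinal.ord_aleph]

theorem countable_Iic_of_lt_omega_one {a : Ordinal.{u}} (ha : a < ω₁) : (Iic a).Countable := by
  rw [← Iio_insert]
  exact (countable_Iio_iff.2 ha).insert a

theorem exists_lt_omega_one_subset_Iic {S : Set Ordinal.{u}} (hS : S.Countable)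
    (hS₁ : S ⊆ Iio ω₁) : ∃ β < ω₁, S ⊆ Iic β := by
  have := hS.to_subtype
  exact ⟨⨆ x : S, x.1, iSup_lt_omega_one fun x => hS₁ x.2,
    fun x hx => Ordinal.le_iSup (fun x : S => x.1) ⟨x, hx⟩⟩

end Ordinal

section

variable {X : Type*} [TopologicalSpace X]

theorem IsCompact.finite_of_isOpen_singleton_of_notMem_closure {K : Set X} (hK : IsCompact K)
    (p : X) (hiso : ∀ x ≠ p, IsOpen {x})
    (hsep : ∀ S : Set X, S.Countable → p ∉ S → p ∉ closure S) : K.Finite := by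
  by_contra hinf
  obtain ⟨S, hSK, hSc, hSinf⟩ :=
    (Set.Infinite.sdiff hinf (finite_singleton p)).exists_subset_countable_infinite
  have hpS : p ∉ S := fun h => (hSK h).2 rfl
  have hdisc : IsDiscrete (K ∩ closure S) :=
    isDiscrete_iff_forall_mem_exists_isOpen.2 fun y hy =>
      ⟨{y}, hiso y (ne_of_mem_of_not_mem hy.2 (hsep S hSc hpS)), by simpa using hy⟩
  exact hSinf (((hK.inter_right isClosed_closure).finite hdisc).subset
    fun x hx => ⟨(hSK hx).1, subset_closure hx⟩)

theorem LindelofSpace.of_countable_compl_nhds (p : X) (h : ∀ U ∈ 𝓝 p, Uᶜ.Countable) :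
    LindelofSpace X := by
  refine ⟨fun f _ _ _ => ?_⟩
  by_cases hp : ClusterPt p f
  · exact ⟨p, mem_univ p, hp⟩
  obtain ⟨U, hU, s, hs, hUs⟩ := inf_eq_bot_iff.1 (not_neBot.1 hp)
  have hsc : s.Countable := (h U hU).mono fun x hxs hxU => hUs.subset ⟨hxU, hxs⟩
  obtain ⟨x, -, hx⟩ := hsc.isLindelof (le_principal_iff.2 hs)
  exact ⟨x, mem_univ x, hx⟩

theorem countable_of_sigmaCompactSpace_of_isCompact_finite [SigmaCompactSpace X]
    (h : ∀ K : Set X, IsCompact K → K.Finite) : Countable X := by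
  rw [← countable_univ_iff, ← iUnion_compactCovering]
  exact countable_iUnion fun n => (h _ (isCompact_compactCovering X n)).countable

end

namespace succSet

theorem omega_one_mem : ω₁ ∈ succSet := by
  right
  rw [mem_singleton_iff, Cardinal.ord_aleph]

theorem succ_mem {a : Ordinal} (ha : a < ω₁) : Order.succ a ∈ succSet := by
  left
  rw [Cardinal.ord_aleph]
  exact ⟨(Cardinal.isSuccLimit_omega 1).succ_lt ha, a, Order.succ_eq_add_one a⟩

theorem le_omega_one_of_mem {o : Ordinal} (ho : o ∈ succSet) : o ≤ ω₁ := by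
  rw [succSet, Cardinal.ord_aleph] at ho
  rcases ho with ⟨ho, -⟩ | rfl
  exacts [ho.le, le_rfl]

theorem not_isSuccLimit_of_mem {o : Ordinal} (ho : o ∈ succSet) (hne : o ≠ ω₁) :
    ¬ Order.IsSuccLimit o := by
  rw [succSet, Cardinal.ord_aleph] at ho
  rcases ho with ⟨-, b, rfl⟩ | rfl
  · rw [← Order.succ_eq_add_one]
    exact Order.not_isSuccLimit_succ b
  · exact absurd rfl hne

noncomputable def top : succSet := ⟨ω₁, omega_one_mem⟩

theorem isOpen_singleton {x : succSet} (hx : x ≠ top) : IsOpen {x} := by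
  have hne : x.1 ≠ ω₁ := fun h => hx (Subtype.ext h)
  rw [← Subtype.val_injective.preimage_image {x}, image_singleton]
  exact (SuccOrder.isOpen_singleton_iff.2 (not_isSuccLimit_of_mem x.2 hne)).preimage
    continuous_subtype_val

theorem top_notMem_closure {S : Set succSet} (hS : S.Countable) (htop : top ∉ S) :
    top ∉ closure S := by
  have hS₁ : (↑) '' S ⊆ Iio ω₁ := by
    rintro _ ⟨x, hx, rfl⟩
    exact (le_omega_one_of_mem x.2).lt_of_ne fun h => htop (Subtype.ext (a2 := top) h ▸ hx)
  obtain ⟨β, hβ, hSβ⟩ := exists_lt_omega_one_subset_Iic (hS.image _) hS₁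
  have hclosure : closure S ⊆ (↑) ⁻¹' Iic β :=
    closure_minimal (image_subset_iff.1 hSβ) (isClosed_Iic.preimage continuous_subtype_val)
  exact fun h => hβ.not_ge (hclosure h)

theorem countable_compl_of_mem_nhds_top {U : Set succSet} (hU : U ∈ 𝓝 top) : Uᶜ.Countable := by
  obtain ⟨V, hV, hVU⟩ := (mem_nhds_subtype _ _ _).1 hU
  obtain ⟨a, ha, haV⟩ := exists_Ioc_subset_of_mem_nhds hV ⟨0, omega_pos 1⟩
  refine ((countable_Iic_of_lt_omega_one ha).preimage Subtype.val_injective).mono fun x hx => ?_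
  by_contra hxa
  exact hx (hVU (haV ⟨not_le.1 hxa, le_omega_one_of_mem x.2⟩))

theorem not_countable : ¬ Countable succSet := fun h =>
  lt_irrefl ω₁ <| countable_Iio_iff.1 <|
    ((countable_coe_iff.1 h).preimage Order.succ_injective).mono fun _ => succ_mem

end succSet

/-- Every compact subset of `A = A₀ ∪ {ω₁}` is finite; consequently `A` is Lindelöf but
not σ-compact. -/
theorem succSet_compacts_finite_lindelof_not_sigmaCompact :
    (∀ K : Set ↥succSet, IsCompact K → K.Finite) ∧
      LindelofSpace ↥succSet ∧ ¬ SigmaCompactSpace ↥succSet := by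
  have hfin (K : Set succSet) (hK : IsCompact K) : K.Finite :=
    hK.finite_of_isOpen_singleton_of_notMem_closure succSet.top
      (fun _ => succSet.isOpen_singleton) fun _ => succSet.top_notMem_closure
  have hlindelof : LindelofSpace succSet :=
    .of_countable_compl_nhds succSet.top fun _ => succSet.countable_compl_of_mem_nhds_top
  exact ⟨hfin, hlindelof,
    fun _ => succSet.not_countable (countable_of_sigmaCompactSpace_of_isCompact_finite hfin)⟩
end
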